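/- arXiv:1706.10068 — 2 statements merged into one kernel-verified Lean document; each statement's English description precedes it below -/
import Mathlib

section
/- The vector fields on ℝ⁴ (coordinates x₁,x₂,x₃,x₄) defined by e₁ = ∂₁, e₂ = ∂₂, e₃ = (x₁+x₂)∂₁ + x₂∂₂ + ∂₃, e₄ = ∂₄ satisfy the bracket relations [e₁,e₃] = e₁, [e₂,e₃] = e₁ + e₂, [e₁,e₂] = 0, and [e₄,eⱼ] = 0 for j = 1,2,3; hence they span a Lie algebra of vector fields isomorphic to A_{3.2} ⊕ A₁. -/
open MvPolynomial

/-- The vector field `e₁ = ∂₁` on `ℝ⁴` (with polynomial coefficients, realized as a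
derivation of the polynomial algebra in the coordinates `x₁,x₂,x₃,x₄`). -/
noncomputable def ee1 : Derivation ℝ (MvPolynomial (Fin 4) ℝ) (MvPolynomial (Fin 4) ℝ) :=
  mkDerivation ℝ ![1, 0, 0, 0]

/-- `e₂ = ∂₂`. -/
noncomputable def ee2 : Derivation ℝ (MvPolynomial (Fin 4) ℝ) (MvPolynomial (Fin 4) ℝ) :=
  mkDerivation ℝ ![0, 1, 0, 0]

/-- `e₃ = (x₁+x₂)∂₁ + x₂∂₂ + ∂₃`. -/
noncomputable def ee3 : Derivation ℝ (MvPolynomial (Fin 4) ℝ) (MvPolynomial (Fin 4) ℝ) :=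
  mkDerivation ℝ ![X 0 + X 1, X 1, 1, 0]

/-- `e₄ = ∂₄`. -/
noncomputable def ee4 : Derivation ℝ (MvPolynomial (Fin 4) ℝ) (MvPolynomial (Fin 4) ℝ) :=
  mkDerivation ℝ ![0, 0, 0, 1]

/-- The vector fields `e₁ = ∂₁`, `e₂ = ∂₂`, `e₃ = (x₁+x₂)∂₁ + x₂∂₂ + ∂₃`, `e₄ = ∂₄` on
`ℝ⁴` satisfy `[e₁,e₃] = e₁`, `[e₂,e₃] = e₁ + e₂`, `[e₁,e₂] = 0`, `[e₄,eⱼ] = 0` for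
`j = 1,2,3`; hence they span a Lie algebra isomorphic to `A_{3.2} ⊕ A₁`. -/
theorem stmt14 :
    ⁅ee1, ee3⁆ = ee1 ∧ ⁅ee2, ee3⁆ = ee1 + ee2 ∧ ⁅ee1, ee2⁆ = 0 ∧
    ⁅ee4, ee1⁆ = 0 ∧ ⁅ee4, ee2⁆ = 0 ∧ ⁅ee4, ee3⁆ = 0 := by
  refine ⟨?_, ?_, ?_, ?_, ?_, ?_⟩ <;>
  · apply derivation_ext
    intro i
    fin_cases i <;>
      simp [ee1, ee2, ee3, ee4, Derivation.commutator_apply, mkDerivation_X]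
end

section
/- The functions a(x₁,x₂,y₁,y₂) = exp(x₁² + x₂ + y₁²) and c = a/2 on ℝ⁴ satisfy the system: ∂a/∂y₂ = 0; (1/2)(2y₁ ∂a/∂x₁ - (4x₁y₁+1) ∂a/∂x₂) + c = 0; ((1/2)∂/∂x₁ - x₁∂/∂x₂ + y₁∂/∂y₂)(c) = 0; (-(1/2)∂/∂y₁ + x₁∂/∂y₂ + y₁∂/∂x₂)(c) = 0. -/
/-- The functions `a(x₁,x₂,y₁,y₂) = exp(x₁² + x₂ + y₁²)` and `c = a/2` satisfy:
`∂a/∂y₂ = 0`; `(1/2)(2y₁ ∂a/∂x₁ - (4x₁y₁+1) ∂a/∂x₂) + c = 0`;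
`((1/2)∂/∂x₁ - x₁∂/∂x₂ + y₁∂/∂y₂)(c) = 0`;
`(-(1/2)∂/∂y₁ + x₁∂/∂y₂ + y₁∂/∂x₂)(c) = 0`. -/
theorem stmt16 :
    let a : ℝ → ℝ → ℝ → ℝ → ℝ := fun x₁ x₂ y₁ _ => Real.exp (x₁ ^ 2 + x₂ + y₁ ^ 2)
    let c : ℝ → ℝ → ℝ → ℝ → ℝ := fun x₁ x₂ y₁ y₂ => a x₁ x₂ y₁ y₂ / 2
    ∀ x₁ x₂ y₁ y₂ : ℝ,
      deriv (fun s => a x₁ x₂ y₁ s) y₂ = 0 ∧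
      (1 / 2) * (2 * y₁ * deriv (fun s => a s x₂ y₁ y₂) x₁
        - (4 * x₁ * y₁ + 1) * deriv (fun s => a x₁ s y₁ y₂) x₂) + c x₁ x₂ y₁ y₂ = 0 ∧
      (1 / 2) * deriv (fun s => c s x₂ y₁ y₂) x₁ - x₁ * deriv (fun s => c x₁ s y₁ y₂) x₂
        + y₁ * deriv (fun s => c x₁ x₂ y₁ s) y₂ = 0 ∧
      -(1 / 2) * deriv (fun s => c x₁ x₂ s y₂) y₁ + x₁ * deriv (fun s => c x₁ x₂ y₁ s) y₂
        + y₁ * deriv (fun s => c x₁ s y₁ y₂) x₂ = 0 := by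
  intro a c x₁ x₂ y₁ y₂
  have h1 : HasDerivAt (fun s : ℝ => Real.exp (s ^ 2 + x₂ + y₁ ^ 2))
      ((2 * x₁) * Real.exp (x₁ ^ 2 + x₂ + y₁ ^ 2)) x₁ := by
    have : HasDerivAt (fun s : ℝ => s ^ 2 + x₂ + y₁ ^ 2) (2 * x₁) x₁ := by
      simpa using (((hasDerivAt_pow 2 x₁).add_const x₂).add_const (y₁ ^ 2))
    simpa [mul_comm] using this.exp
  have h2 : HasDerivAt (fun s : ℝ => Real.exp (x₁ ^ 2 + s + y₁ ^ 2))
      (Real.exp (x₁ ^ 2 + x₂ + y₁ ^ 2)) x₂ := by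
    have : HasDerivAt (fun s : ℝ => x₁ ^ 2 + s + y₁ ^ 2) 1 x₂ := by
      simpa using ((hasDerivAt_id x₂).const_add (x₁ ^ 2)).add_const (y₁ ^ 2)
    simpa using this.exp
  have h3 : HasDerivAt (fun s : ℝ => Real.exp (x₁ ^ 2 + x₂ + s ^ 2))
      ((2 * y₁) * Real.exp (x₁ ^ 2 + x₂ + y₁ ^ 2)) y₁ := by
    have : HasDerivAt (fun s : ℝ => x₁ ^ 2 + x₂ + s ^ 2) (2 * y₁) y₁ := by
      simpa using (hasDerivAt_pow 2 y₁).const_add (x₁ ^ 2 + x₂)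
    simpa [mul_comm] using this.exp
  simp only [a, c, deriv_const]
  refine ⟨by simp, ?_, ?_, ?_⟩
  · rw [h1.deriv, h2.deriv]; ring
  · rw [(h1.div_const 2).deriv, (h2.div_const 2).deriv]
    simp; ring
  · rw [(h3.div_const 2).deriv, (h2.div_const 2).deriv]
    simp; ring
end
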